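/- arXiv:1611.01141 — 2 statements merged into one kernel-verified Lean document; each statement's English description precedes it below -/
import Mathlib

section
/- Let M be a finite Frobenius bimodule over a finite ring R, C ⊆ M^n a left R-submodule, and f : C → M^n a left R-linear map preserving the Rosenbloom–Tsfasman weight. Then there exists an invertible lower triangular matrix A ∈ GL_n(R) with f(v) = vA for all v ∈ C; in particular f extends to an RT-weight-preserving automorphism of M^n. -/
/-!
Since `f` preserves the RT-weight, on the vectors of `C` vanishing beyond position `j` the maps
`v ↦ vⱼ` and `v ↦ (f v)ⱼ` have the same kernel, and `(f v)ⱼ` only depends on `vⱼ, vⱼ₊₁, …`.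
A generating character makes `_R M` an injective module whose linear maps `M^ι → M` are the maps
`v ↦ ∑ vᵢ rᵢ`; hence `(f v)ⱼ = ∑_{i ≥ j} vᵢ aᵢⱼ`. The coefficient `aⱼⱼ` can be taken to be a unit by
the extension theorem in length one: two linear maps to `M` with the same kernel differ by a unit
of `R`. That is proved by enlarging the graph of a partial isomorphism `E → M`, extended to
`M → M` as a right multiplication `· r`, by the graph of a suitable map on a simple submodule of
`ker (· r)` until `· r` becomes bijective. A lower triangular matrix with unit diagonal is
invertible, being a diagonal unit times a unipotent matrix.
-/

open MulOpposite

/-- `χ` is a (two-sided) generating character of the finite `(R,R)`-bimodule `M`: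
the map `r ↦ r·χ` (where `(r·χ)(v) = χ(v·r)`, using the right action of `R` on `M`)
and the map `r ↦ χ·r` (where `(χ·r)(v) = χ(r·v)`) are bijections from `R` onto the
character group `M̂`, i.e. `M̂` is free of rank one as a left and as a right `R`-module
with basis `χ`. -/
def IsGenChar (R M : Type*) [Ring R] [AddCommGroup M]
    [Module R M] [Module Rᵐᵒᵖ M] (χ : AddChar M ℂˣ) : Prop :=
  (Function.Injective fun r : R => fun v : M => χ (op r • v)) ∧
  (∀ ψ : AddChar M ℂˣ, ∃ r : R, ∀ v : M, ψ v = χ (op r • v)) ∧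
  (Function.Injective fun r : R => fun v : M => χ (r • v)) ∧
  (∀ ψ : AddChar M ℂˣ, ∃ r : R, ∀ v : M, ψ v = χ (r • v))

/-- `M` is a Frobenius bimodule over `R`: `_R M ≅ _R R̂` and `M_R ≅ R̂_R`, equivalently
the character bimodule `M̂` is free of rank one on each side, with a common generator. -/
def IsFrobeniusBimodule (R M : Type*) [Ring R] [AddCommGroup M]
    [Module R M] [Module Rᵐᵒᵖ M] : Prop :=
  ∃ χ : AddChar M ℂˣ, IsGenChar R M χ

open Finset Classical in
/-- The Rosenbloom–Tsfasman weight of `v ∈ M^n`: `0` if `v = 0`, and `max{i : vᵢ ≠ 0}`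
(with positions numbered `1,…,n`) otherwise. -/
noncomputable def rtWeight {M : Type*} [Zero M] {n : ℕ} (v : Fin n → M) : ℕ :=
  (Finset.univ.filter (fun i : Fin n => v i ≠ 0)).sup (fun i => i.1 + 1)

open Function

theorem AddChar.map_sum_eq_prod {A M ι : Type*} [AddCommMonoid A] [CommMonoid M]
    (ψ : AddChar A M) (s : Finset ι) (f : ι → A) : ψ (∑ i ∈ s, f i) = ∏ i ∈ s, ψ (f i) := by
  rw [← toAdd_ofAdd (∑ i ∈ s, f i), ofAdd_sum, ← AddChar.toMonoidHom_apply, map_prod]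
  rfl

noncomputable instance : DivisibleBy (Additive ℂˣ) ℤ :=
  Function.Surjective.divisibleBy
    (fun z : ℂ => Additive.ofMul (Units.mk0 (Complex.exp z) (Complex.exp_ne_zero z)))
    (fun x => by
      obtain ⟨z, hz⟩ : (x.toMul : ℂ) ∈ Set.range Complex.exp := by
        rw [Complex.range_exp]; exact x.toMul.ne_zero
      exact ⟨z, Additive.toMul.injective (Units.ext hz)⟩)
    (fun z n => Additive.toMul.injective (Units.ext (by simp [Complex.exp_int_mul])))

theorem AddChar.exists_comp_eq_of_ker_le {A B : Type*} [AddCommGroup A] [AddCommGroup B]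
    (p : A →+ B) (φ : AddChar A ℂˣ) (hφ : ∀ a, p a = 0 → φ a = 1) :
    ∃ ψ : AddChar B ℂˣ, ∀ a, ψ (p a) = φ a := by
  let φ' : A ⧸ p.ker →+ Additive ℂˣ := QuotientAddGroup.lift p.ker (toAddMonoidHomEquiv φ)
    fun a ha => congrArg Additive.ofMul (hφ a ha)
  obtain ⟨ψ, hψ⟩ := (Module.Baer.of_divisible (A := Additive ℂˣ)).extension_property_addMonoidHom
    (QuotientAddGroup.kerLift p) (QuotientAddGroup.kerLift_injective p) φ'
  exact ⟨toAddMonoidHomEquiv.symm ψ,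
    fun a => congrArg Additive.toMul (DFunLike.congr_fun hψ (a : A ⧸ p.ker))⟩

theorem AddChar.exists_apply_ne_one_of_ne_zero {G : Type*} [AddCommGroup G] [Finite G]
    {a : G} (ha : a ≠ 0) : ∃ ψ : AddChar G ℂˣ, ψ a ≠ 1 := by
  have : NeZero (Monoid.exponent (Multiplicative G) : ℂ) :=
    ⟨Nat.cast_ne_zero.mpr Monoid.ExponentExists.of_finite.exponent_ne_zero⟩
  obtain ⟨φ, hφ⟩ := CommGroup.exists_apply_ne_one_of_hasEnoughRootsOfUnity
    (Multiplicative G) ℂ (a := Multiplicative.ofAdd a) (by simpa using ha)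
  exact ⟨toMonoidHomEquiv.symm φ, by simpa using hφ⟩

section Submodule

variable {R M : Type*} [Ring R] [AddCommGroup M] [Module R M]

theorem Submodule.disjoint_sup_ker {P : Type*} [AddCommGroup P] [Module R P]
    (f : M →ₗ[R] P) {A B : Submodule R M} (hA : Disjoint A (LinearMap.ker f))
    (hB : Disjoint B (LinearMap.ker f)) (hAB : Disjoint (A.map f) (B.map f)) :
    Disjoint (A ⊔ B) (LinearMap.ker f) := by
  rw [Submodule.disjoint_def] at hA hB hAB ⊢
  intro x hx hfx
  obtain ⟨a, ha, b, hb, rfl⟩ := Submodule.mem_sup.mp hx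
  have hfab : f a = -f b := eq_neg_of_add_eq_zero_left (by simpa using hfx)
  have hfa : f a = 0 := hAB _ (Submodule.mem_map_of_mem ha)
    (hfab ▸ Submodule.neg_mem _ (Submodule.mem_map_of_mem hb))
  have hfb : f b = 0 := by rw [← neg_eq_zero, ← hfab, hfa]
  rw [hA a ha hfa, hB b hb hfb, add_zero]

/-- Counting argument: `Hom(S, E) × Hom(S, S)` embeds in `Hom(S, M)`, which cannot embed in
`Hom(S, F) ≃ Hom(S, E)` since `Hom(S, S)` has at least two elements. -/
theorem Submodule.exists_linearMap_range_not_le [Finite M] {E F S : Submodule R M}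
    (e : E ≃ₗ[R] F) (hES : Disjoint E S) (hS : S ≠ ⊥) :
    ∃ φ : S →ₗ[R] M, ¬ LinearMap.range φ ≤ F := by
  by_contra! hall
  have : Finite (S →ₗ[R] E) := Finite.of_injective _ DFunLike.coe_injective
  have : Finite (S →ₗ[R] S) := Finite.of_injective _ DFunLike.coe_injective
  have : Nontrivial S := Submodule.nontrivial_iff_ne_bot.mpr hS
  let J₁ : (S →ₗ[R] E) × (S →ₗ[R] S) → (S →ₗ[R] M) := fun a => E.subtype ∘ₗ a.1 + S.subtype ∘ₗ a.2
  let J₂ : (S →ₗ[R] M) → (S →ₗ[R] E) := fun φ =>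
    e.symm.toLinearMap ∘ₗ φ.codRestrict F fun s => hall φ (LinearMap.mem_range_self φ s)
  have hJ₁ : Injective J₁ := fun a b h => by
    have key : ∀ s, a.1 s = b.1 s ∧ a.2 s = b.2 s := fun s => by
      have h' : (a.1 s : M) + a.2 s = b.1 s + b.2 s := LinearMap.congr_fun h s
      have hdiff : (a.1 s : M) - b.1 s = b.2 s - a.2 s := by
        rw [sub_eq_sub_iff_add_eq_add, h', add_comm]
      have h₁ : (a.1 s : M) = b.1 s := sub_eq_zero.mp <| Submodule.disjoint_def.mp hES _
        (sub_mem (a.1 s).2 (b.1 s).2) (hdiff ▸ sub_mem (b.2 s).2 (a.2 s).2)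
      exact ⟨Subtype.ext h₁, Subtype.ext (add_left_cancel (h₁ ▸ h'))⟩
    exact Prod.ext (LinearMap.ext fun s => (key s).1) (LinearMap.ext fun s => (key s).2)
  have hJ₂ : Injective J₂ := fun φ ψ h => by
    ext s
    simpa [J₂] using congrArg Subtype.val (e.symm.injective (LinearMap.congr_fun h s))
  have hcard := Nat.card_le_card_of_injective _ (hJ₂.comp hJ₁)
  rw [Nat.card_prod] at hcard
  have h1 : 0 < Nat.card (S →ₗ[R] E) := Nat.card_pos
  have h2 : 1 < Nat.card (S →ₗ[R] S) := Finite.one_lt_card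
  nlinarith

end Submodule

section Graph

variable {R M : Type*} [Ring R] [AddCommGroup M] [Module R M] [Module Rᵐᵒᵖ M]
  [SMulCommClass R Rᵐᵒᵖ M]

open LinearMap in
/-- Adjoin to `Γ` the graph of an injective map on a simple submodule `S ⊆ ker (· r)` whose image
misses `Γ.map snd`; `S` misses `Γ.map fst` because `· r` is injective there. -/
theorem exists_gt_of_disjoint_ker_fst_snd [Finite M] {Γ : Submodule R (M × M)}
    (h₁ : Disjoint Γ (ker (fst R M M))) (h₂ : Disjoint Γ (ker (snd R M M)))
    {r : R} (hr : ∀ p ∈ Γ, p.2 = op r • p.1) {m₀ : M} (hrm₀ : op r • m₀ = 0) (hm₀ : m₀ ≠ 0) :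
    ∃ Γ', Γ < Γ' ∧ Disjoint Γ' (ker (fst R M M)) ∧ Disjoint Γ' (ker (snd R M M)) := by
  obtain ⟨S, hS, hSm₀⟩ := (eq_bot_or_exists_atom_le (R ∙ m₀)).resolve_left
    (by simpa using hm₀)
  have hrS : ∀ s ∈ S, op r • s = 0 := fun s hs => by
    obtain ⟨t, rfl⟩ := Submodule.mem_span_singleton.mp (hSm₀ hs)
    rw [← smul_comm t (op r) m₀, hrm₀, smul_zero]
  have hΓ (f : M × M →ₗ[R] M) (hf : Disjoint Γ (ker f)) : Γ ≃ₗ[R] Γ.map f :=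
    (LinearEquiv.ofInjective (f ∘ₗ Γ.subtype) (injective_iff_map_eq_zero _ |>.mpr fun p hp =>
      Subtype.ext (Submodule.disjoint_def.mp hf p p.2 hp))).trans
      (LinearEquiv.ofEq _ _ (by rw [range_comp, Submodule.range_subtype]))
  have hES : Disjoint (Γ.map (fst R M M)) S := Submodule.disjoint_def.mpr <| by
    rintro _ ⟨p, hp, rfl⟩ hpS
    have hp₂ : p.2 = 0 := by rw [hr p hp]; exact hrS _ hpS
    simp [Submodule.disjoint_def.mp h₂ p hp hp₂]
  obtain ⟨φ, hφ⟩ :=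
    Submodule.exists_linearMap_range_not_le ((hΓ _ h₁).symm.trans (hΓ _ h₂)) hES hS.1
  have hφF : Submodule.comap φ (Γ.map (snd R M M)) = ⊥ := by
    have : IsSimpleModule R S := isSimpleModule_iff_isAtom.mpr hS
    refine (eq_bot_or_eq_top _).resolve_right fun htop => hφ ?_
    rw [range_eq_map, Submodule.map_le_iff_le_comap, htop]
  have hφinj : Injective φ := by
    rw [← ker_eq_bot, eq_bot_iff, ← hφF]
    exact Submodule.comap_mono bot_le
  obtain ⟨s₀, hs₀S, hs₀⟩ := Submodule.exists_mem_ne_zero_of_ne_bot hS.1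
  refine ⟨Γ ⊔ range ((S.subtype).prod φ), lt_of_le_of_ne le_sup_left fun hΓeq => ?_,
    Submodule.disjoint_sup_ker _ h₁ ?_ ?_, Submodule.disjoint_sup_ker _ h₂ ?_ ?_⟩
  · have hmem := Submodule.mem_sup_right (S := Γ) (mem_range_self (S.subtype.prod φ) ⟨s₀, hs₀S⟩)
    rw [← hΓeq] at hmem
    have : φ ⟨s₀, hs₀S⟩ = φ 0 := by
      rw [map_zero]; simpa [hrS s₀ hs₀S] using hr _ hmem
    exact hs₀ (congrArg Subtype.val (hφinj this))
  · refine Submodule.disjoint_def.mpr ?_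
    rintro _ ⟨s, rfl⟩ hs
    simp_all
  · refine hES.mono_right ?_
    rintro _ ⟨_, ⟨s, rfl⟩, rfl⟩
    exact s.2
  · refine Submodule.disjoint_def.mpr ?_
    rintro _ ⟨s, rfl⟩ hs
    simp_all
  · refine Submodule.disjoint_def.mpr ?_
    rintro _ hF ⟨_, ⟨s, rfl⟩, rfl⟩
    have hs : s ∈ Submodule.comap φ (Γ.map (snd R M M)) := by simpa using hF
    rw [hφF, Submodule.mem_bot] at hs
    simp [hs]

end Graph

section rtWeight

variable {M : Type*} [Zero M] {n : ℕ}

theorem rtWeight_le_iff (v : Fin n → M) (k : ℕ) :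
    rtWeight v ≤ k ↔ ∀ i : Fin n, k ≤ i.1 → v i = 0 := by
  unfold rtWeight
  simp only [Finset.sup_le_iff, Finset.mem_filter, Finset.mem_univ, true_and]
  refine forall_congr' fun i => ⟨fun h hk => ?_, fun h hv => ?_⟩
  · by_contra hv
    have := h hv
    omega
  · by_contra hk
    exact hv (h (by omega))

theorem rtWeight_le_iff_apply_eq_zero {v : Fin n → M} {j : Fin n} (hv : rtWeight v ≤ j.1 + 1) :
    rtWeight v ≤ j ↔ v j = 0 := by
  rw [rtWeight_le_iff] at hv ⊢
  refine ⟨fun h => h j le_rfl, fun hj i hi => ?_⟩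
  rcases hi.eq_or_lt with h | h
  · rwa [← Fin.ext h]
  · exact hv i h

end rtWeight

namespace Matrix

variable {n : ℕ} {S : Type*} [Ring S]

theorem isNilpotent_of_forall_le_imp_apply_eq_zero {X : Matrix (Fin n) (Fin n) S}
    (hX : ∀ i j, i ≤ j → X i j = 0) : IsNilpotent X := by
  have hpow : ∀ k : ℕ, ∀ i j : Fin n, i.1 < j.1 + k → (X ^ k) i j = 0 := by
    intro k
    induction k with
    | zero => exact fun i j hij => one_apply_ne (by omega)
    | succ k ih =>
      intro i j hij
      rw [pow_succ, mul_apply]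
      refine Finset.sum_eq_zero fun l _ => ?_
      by_cases hl : i.1 < l.1 + k
      · rw [ih i l hl, zero_mul]
      · rw [hX l j (by rw [Fin.le_def]; omega), mul_zero]
  exact ⟨n, ext fun i j => hpow n i j (by omega)⟩

theorem IsLowerTriangular.isUnit {A : Matrix (Fin n) (Fin n) S} (hA : A.IsLowerTriangular)
    (hdiag : ∀ i, IsUnit (A i i)) : IsUnit A := by
  let d : (Fin n → S)ˣ := (Pi.isUnit_iff.mpr hdiag).unit
  let D : (Matrix (Fin n) (Fin n) S)ˣ := Units.map (diagonalRingHom (Fin n) S).toMonoidHom d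
  have hD : ∀ i j, ((↑D⁻¹ : Matrix (Fin n) (Fin n) S) * A) i j = (↑d⁻¹ : Fin n → S) i * A i j :=
    fun i j => diagonal_mul _ _ _ _
  have hX : IsNilpotent ((↑D⁻¹ : Matrix (Fin n) (Fin n) S) * A - 1) :=
    isNilpotent_of_forall_le_imp_apply_eq_zero fun i j hij => by
      rcases hij.lt_or_eq with h | rfl
      · simp [hD, hA h, one_apply_ne h.ne]
      · simpa [hD, sub_eq_zero, d] using congrFun d.inv_mul i
  exact (Units.isUnit_units_mul D⁻¹ A).mp (by simpa using hX.isUnit_one_add)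

end Matrix

namespace IsGenChar

variable {R M : Type*} [Ring R] [AddCommGroup M] [Module R M] [Module Rᵐᵒᵖ M]
  {χ : AddChar M ℂˣ}

theorem isUnit_of_bijective (hχ : IsGenChar R M χ) {r : R}
    (hr : Bijective fun m : M => op r • m) : IsUnit r := by
  let e : M ≃+ M := AddEquiv.ofBijective (DistribSMul.toAddMonoidHom M (op r)) hr
  obtain ⟨s, hs⟩ := hχ.2.1 (χ.compAddMonoidHom e.symm.toAddMonoidHom)
  have eq_one : ∀ {a : R}, (∀ m : M, χ (op a • m) = χ m) → a = 1 := fun h =>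
    hχ.1 (funext fun m => by simp only [h, op_one, one_smul])
  have hrs : r * s = 1 := eq_one fun m => by
    rw [op_mul, mul_smul, ← hs]
    exact congrArg χ (e.symm_apply_apply m)
  have hsr : s * r = 1 := eq_one fun m => by
    obtain ⟨w, rfl⟩ := hr.2 m
    rw [op_mul, mul_smul, ← mul_smul (op s), ← op_mul, hrs, op_one, one_smul]
  exact ⟨⟨r, s, hrs, hsr⟩, rfl⟩

variable [Finite M]

theorem eq_of_forall_smul (hχ : IsGenChar R M χ) {a b : M}
    (h : ∀ t : R, χ (t • a) = χ (t • b)) : a = b := by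
  by_contra hab
  obtain ⟨ψ, hψ⟩ := AddChar.exists_apply_ne_one_of_ne_zero (sub_ne_zero.mpr hab)
  obtain ⟨t, ht⟩ := hχ.2.2.2 ψ
  exact hψ (by rw [ht, smul_sub, AddChar.map_sub_eq_div, h t, div_self'])

variable [SMulCommClass R Rᵐᵒᵖ M] {N : Type*} [AddCommGroup N] [Module R N]

theorem exists_eq_sum_op_smul_of_ker_le (hχ : IsGenChar R M χ) {ι : Type*}
    [Fintype ι] [DecidableEq ι] (p : N →ₗ[R] ι → M) (h : N →ₗ[R] M)
    (hker : LinearMap.ker p ≤ LinearMap.ker h) :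
    ∃ r : ι → R, ∀ x, h x = ∑ i, op (r i) • p x i := by
  obtain ⟨ψ, hψ⟩ := AddChar.exists_comp_eq_of_ker_le p.toAddMonoidHom
    (χ.compAddMonoidHom h.toAddMonoidHom) fun x hx => by
      simp [show h x = 0 from hker hx]
  choose r hr using fun i => hχ.2.1 (ψ.compAddMonoidHom (AddMonoidHom.single (fun _ => M) i))
  have hψr : ∀ v, ψ v = χ (∑ i, op (r i) • v i) := fun v => by
    conv_lhs => rw [← Finset.univ_sum_single v]
    rw [AddChar.map_sum_eq_prod, AddChar.map_sum_eq_prod]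
    exact Finset.prod_congr rfl fun i _ => hr i (v i)
  refine ⟨r, fun x => hχ.eq_of_forall_smul fun t => ?_⟩
  calc χ (t • h x) = ψ (p (t • x)) := by rw [← h.map_smul]; exact (hψ _).symm
    _ = χ (t • ∑ i, op (r i) • p x i) := by
      simp only [hψr, map_smul, Pi.smul_apply, Finset.smul_sum, smul_comm t]

theorem exists_eq_op_smul_of_ker_le (hχ : IsGenChar R M χ) (p h : N →ₗ[R] M)
    (hker : LinearMap.ker p ≤ LinearMap.ker h) : ∃ r : R, ∀ x, h x = op r • p x := by
  obtain ⟨r, hr⟩ := hχ.exists_eq_sum_op_smul_of_ker_le (ι := Unit) (LinearMap.pi fun _ => p) h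
    fun x hx => hker (by simpa using congrFun hx ())
  exact ⟨r (), fun x => by simpa using hr x⟩

open LinearMap in
theorem exists_unit_of_disjoint_ker_fst_snd (hχ : IsGenChar R M χ)
    (Γ : Submodule R (M × M)) (h₁ : Disjoint Γ (ker (fst R M M)))
    (h₂ : Disjoint Γ (ker (snd R M M))) : ∃ u : Rˣ, ∀ p ∈ Γ, p.2 = op (u : R) • p.1 := by
  induction Γ using WellFoundedGT.induction with
  | _ Γ ih =>
  obtain ⟨r, hr⟩ := hχ.exists_eq_op_smul_of_ker_le (fst R M M ∘ₗ Γ.subtype)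
    (snd R M M ∘ₗ Γ.subtype) fun p hp => by
      obtain rfl : p = 0 := Subtype.ext (Submodule.disjoint_def.mp h₁ p p.2 hp)
      exact Submodule.zero_mem _
  by_cases hinj : Injective fun m : M => op r • m
  · exact ⟨(hχ.isUnit_of_bijective (Finite.injective_iff_bijective.mp hinj)).unit,
      fun p hp => hr ⟨p, hp⟩⟩
  obtain ⟨m₀, hrm₀, hm₀⟩ : ∃ m₀ : M, op r • m₀ = 0 ∧ m₀ ≠ 0 := by
    simpa using mt (injective_iff_map_eq_zero (DistribSMul.toAddMonoidHom M (op r))).mpr hinj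
  obtain ⟨Γ', hΓ', h₁', h₂'⟩ :=
    exists_gt_of_disjoint_ker_fst_snd h₁ h₂ (fun p hp => hr ⟨p, hp⟩) hrm₀ hm₀
  obtain ⟨u, hu⟩ := ih Γ' hΓ' h₁' h₂'
  exact ⟨u, fun p hp => hu p (hΓ'.le hp)⟩

theorem exists_unit_of_ker_eq (hχ : IsGenChar R M χ) (a b : N →ₗ[R] M)
    (hab : LinearMap.ker a = LinearMap.ker b) : ∃ u : Rˣ, ∀ x, b x = op (u : R) • a x := by
  have h₁ : Disjoint (LinearMap.range (a.prod b)) (LinearMap.ker (LinearMap.fst R M M)) := by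
    refine Submodule.disjoint_def.mpr ?_
    rintro _ ⟨x, rfl⟩ hx
    have hbx : b x = 0 := by rw [← LinearMap.mem_ker, ← hab]; simpa using hx
    simp_all
  have h₂ : Disjoint (LinearMap.range (a.prod b)) (LinearMap.ker (LinearMap.snd R M M)) := by
    refine Submodule.disjoint_def.mpr ?_
    rintro _ ⟨x, rfl⟩ hx
    have hax : a x = 0 := by rw [← LinearMap.mem_ker, hab]; simpa using hx
    simp_all
  obtain ⟨u, hu⟩ := hχ.exists_unit_of_disjoint_ker_fst_snd _ h₁ h₂
  exact ⟨u, fun x => hu _ (LinearMap.mem_range_self _ x)⟩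

theorem exists_unit_add_sum (hχ : IsGenChar R M χ) {ι : Type*} [Fintype ι]
    [DecidableEq ι] (a b : N →ₗ[R] M) (q : N →ₗ[R] ι → M)
    (hab : ∀ x ∈ LinearMap.ker q, a x = 0 ↔ b x = 0) :
    ∃ u : Rˣ, ∃ s : ι → R, ∀ x, b x = op (u : R) • a x + ∑ i, op (s i) • q x i := by
  obtain ⟨u, hu⟩ := hχ.exists_unit_of_ker_eq (a ∘ₗ (LinearMap.ker q).subtype)
    (b ∘ₗ (LinearMap.ker q).subtype) (by ext x; exact hab x x.2)
  have := SMulCommClass.symm R Rᵐᵒᵖ M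
  obtain ⟨s, hs⟩ := hχ.exists_eq_sum_op_smul_of_ker_le q
    (b - DistribSMul.toLinearMap R M (op (u : R)) ∘ₗ a) fun x hx => by
      simpa [sub_eq_zero] using hu ⟨x, hx⟩
  exact ⟨u, s, fun x => by simp [← hs]⟩

theorem exists_column_of_rtWeight_eq (hχ : IsGenChar R M χ) {n : ℕ}
    {C : Submodule R (Fin n → M)} (f : C →ₗ[R] (Fin n → M))
    (hf : ∀ v : C, rtWeight (f v) = rtWeight (v : Fin n → M)) (j : Fin n) :
    ∃ a : Fin n → R, IsUnit (a j) ∧ (∀ i, i < j → a i = 0) ∧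
      ∀ v : C, f v j = ∑ i, op (a i) • (v : Fin n → M) i := by
  let q : (Fin n → M) →ₗ[R] Fin n → M :=
    LinearMap.pi fun i => if j < i then LinearMap.proj i else 0
  have hq : ∀ v i, q v i = if j < i then v i else 0 := fun v i => by
    by_cases h : j < i <;> simp [q, h]
  obtain ⟨u, s, hus⟩ := hχ.exists_unit_add_sum (LinearMap.proj j ∘ₗ C.subtype)
    (LinearMap.proj j ∘ₗ f) (q ∘ₗ C.subtype) fun v hv => by
      -- `v` vanishes beyond `j`, so `v j = 0` and `f v j = 0` both say that the weight is `≤ j`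
      have hv' : rtWeight (v : Fin n → M) ≤ j.1 + 1 := (rtWeight_le_iff _ _).mpr fun i hi => by
        simpa [hq, show j < i from Fin.lt_def.mpr hi] using congrFun hv i
      simp only [LinearMap.coe_comp, Function.comp_apply, Submodule.coe_subtype,
        LinearMap.coe_proj, Function.eval]
      rw [← rtWeight_le_iff_apply_eq_zero hv', ← rtWeight_le_iff_apply_eq_zero (hf v ▸ hv'), hf]
  refine ⟨fun i => if i = j then u else if j < i then s i else 0, by simp,
    fun i hi => by simp [hi.ne, hi.not_gt], fun v => ?_⟩
  have hterm : ∀ i, op (if i = j then (u : R) else if j < i then s i else 0) • (v : Fin n → M) i =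
      (if i = j then op (u : R) • (v : Fin n → M) j else 0) + op (s i) • q v i := fun i => by
    rcases lt_trichotomy i j with h | rfl | h
    · simp [hq, h.ne, h.not_gt]
    · simp [hq]
    · simp [hq, h, h.ne']
  simpa [hterm, Finset.sum_add_distrib] using hus v

end IsGenChar

theorem rt_extension_theorem_general
    (R M : Type*) [Ring R] [AddCommGroup M] [Fintype M]
    [Module R M] [Module Rᵐᵒᵖ M] [SMulCommClass R Rᵐᵒᵖ M]
    (hM : IsFrobeniusBimodule R M)
    (n : ℕ) (C : Submodule R (Fin n → M)) (f : C →ₗ[R] (Fin n → M))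
    (hf : ∀ v : C, rtWeight (f v) = rtWeight (v : Fin n → M)) :
    ∃ A : (Matrix (Fin n) (Fin n) R)ˣ,
      (∀ i j : Fin n, i < j → A.val i j = 0) ∧
      ∀ v : C, ∀ j : Fin n, f v j = ∑ i : Fin n, op (A.val i j) • (v : Fin n → M) i := by
  obtain ⟨χ, hχ⟩ := hM
  choose a ha_unit ha_zero ha using hχ.exists_column_of_rtWeight_eq f hf
  let A : Matrix (Fin n) (Fin n) R := Matrix.of fun i j => a j i
  have hA : A.IsLowerTriangular := fun i j hij => ha_zero j i hij
  exact ⟨(hA.isUnit ha_unit).unit, fun i j hij => hA hij, fun v j => ha j v⟩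

/-- MacWilliams extension theorem for the RT-weight: if `M` is a finite Frobenius
bimodule over a finite ring `R`, `C ⊆ M^n` a left `R`-submodule and `f : C → M^n` a left
`R`-linear map preserving the Rosenbloom–Tsfasman weight, then there is an invertible
lower triangular matrix `A ∈ GL_n(R)` with `f(v) = vA` for all `v ∈ C`; in particular `f`
extends to an RT-weight-preserving automorphism of `M^n`. -/
theorem rt_extension_theorem
    (R M : Type*) [Ring R] [Fintype R] [AddCommGroup M] [Fintype M]
    [Module R M] [Module Rᵐᵒᵖ M] [SMulCommClass R Rᵐᵒᵖ M]
    (hM : IsFrobeniusBimodule R M)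
    (n : ℕ) (C : Submodule R (Fin n → M)) (f : C →ₗ[R] (Fin n → M))
    (hf : ∀ v : C, rtWeight (f v) = rtWeight (v : Fin n → M)) :
    ∃ A : (Matrix (Fin n) (Fin n) R)ˣ,
      (∀ i j : Fin n, i < j → A.val i j = 0) ∧
      ∀ v : C, ∀ j : Fin n, f v j = ∑ i : Fin n, op (A.val i j) • (v : Fin n → M) i :=
  rt_extension_theorem_general R M hM n C f hf
end

section
/- Let M be a finite Frobenius bimodule over a finite ring R with generating character χ. Then the normalized homogeneous weight on M is given by ω(v) = 1 − (1/|R*|) Σ_{α∈R*} χ(vα) for all v ∈ M. -/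
open MulOpposite

/-!
Write `f` for the right-hand side. It has the defining properties of the homogeneous weight, and
two functions with these properties agree: by induction over the cyclic submodules, the sum of
their difference over `Rv` is a positive multiple of its value at `v`.

`∑_{w ∈ Rv} f(w) = |Rv|` for `v ≠ 0` because each `w ↦ χ(w·α)`, `α ∈ R*`, is a nontrivial
character of `Rv`: the translates `χ(r·-)` exhaust `M̂`, and characters separate points.
That `f(v)` depends only on `Rv` needs more. For a right ideal `I`, the sum `∑_{r ∈ I} χ(v·r)`
is `|I|` or `0` according as `χ(v·I) = 1` or not, a condition depending only on `Rv` because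
`χ(s·x) = χ(x·t)` for some `t`. Möbius inversion over the lattice of right ideals passes this on
to the sums over the generators of each right ideal, and the generators of `R_R` are the units.
-/

open Classical

theorem AddChar.exists_units_apply_ne_one {A : Type*} [AddCommGroup A] [Finite A] {a : A}
    (ha : a ≠ 0) : ∃ ψ : AddChar A ℂˣ, ψ a ≠ 1 := by
  have : NeZero (Monoid.exponent (Multiplicative A) : ℂ) :=
    ⟨by exact_mod_cast Monoid.exponent_ne_zero_of_finite⟩
  obtain ⟨φ, hφ⟩ := CommGroup.exists_apply_ne_one_of_hasEnoughRootsOfUnity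
    (Multiplicative A) ℂ (a := Multiplicative.ofAdd a) (by simpa using ha)
  exact ⟨AddChar.toMonoidHomEquiv.symm φ, hφ⟩

theorem eq_of_forall_sum_le_eq {P G : Type*} [PartialOrder P] [Fintype P] [AddCommGroup G]
    {f g : P → G} (h : ∀ i, ∑ j with j ≤ i, f j = ∑ j with j ≤ i, g j) : f = g := by
  funext i
  induction i using WellFoundedLT.induction with
  | ind i ih =>
    have hsplit : ∀ φ : P → G, ∑ j with j ≤ i, φ j = φ i + ∑ j with j < i, φ j := by
      intro φ
      rw [← Finset.add_sum_erase _ _ (by simp : i ∈ Finset.univ.filter (· ≤ i))]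
      congr 2
      ext j
      simp [lt_iff_le_and_ne, and_comm]
    have hi := h i
    rw [hsplit, hsplit, Finset.sum_congr rfl fun j hj => ih j (by simpa using hj)] at hi
    exact add_right_cancel hi

section RightIdeal

variable {R : Type*} [Ring R]

theorem span_op_singleton_eq_top_iff [IsDedekindFiniteMonoid R] (r : R) :
    Submodule.span Rᵐᵒᵖ {r} = ⊤ ↔ IsUnit r := by
  rw [Submodule.span_singleton_eq_top_iff, isUnit_iff_exists_inv]
  constructor
  · intro h
    obtain ⟨a, ha⟩ := h 1
    exact ⟨a.unop, ha⟩
  · rintro ⟨b, hb⟩ x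
    exact ⟨op (b * x), by simp [smul_eq_mul_unop, ← mul_assoc, hb]⟩

variable [Fintype R]

theorem AddChar.sum_mem_rightIdeal_eq_ite (ψ : AddChar R ℂ) (I : Submodule Rᵐᵒᵖ R) :
    ∑ r with r ∈ I, ψ r = if ∀ r ∈ I, ψ r = 1 then (Fintype.card I : ℂ) else 0 := by
  rw [Finset.sum_subtype _ (p := (· ∈ I)) (by simp) ψ]
  simpa [AddChar.eq_zero_iff] using
    AddChar.sum_eq_ite (ψ.compAddMonoidHom I.subtype.toAddMonoidHom)

theorem AddChar.sum_units_eq_of_forall_rightIdeal (ψ₁ ψ₂ : AddChar R ℂ)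
    (h : ∀ I : Submodule Rᵐᵒᵖ R, (∀ r ∈ I, ψ₁ r = 1) ↔ (∀ r ∈ I, ψ₂ r = 1)) :
    ∑ u : Rˣ, ψ₁ u = ∑ u : Rˣ, ψ₂ u := by
  let := Fintype.ofFinite (Submodule Rᵐᵒᵖ R)
  let sumGens (ψ : AddChar R ℂ) (I : Submodule Rᵐᵒᵖ R) : ℂ :=
    ∑ r with Submodule.span Rᵐᵒᵖ {r} = I, ψ r
  have hsum_le (ψ : AddChar R ℂ) (I : Submodule Rᵐᵒᵖ R) :
      ∑ J with J ≤ I, sumGens ψ J = ∑ r with r ∈ I, ψ r := by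
    rw [← Finset.sum_fiberwise_of_maps_to (g := fun r => Submodule.span Rᵐᵒᵖ {r})
      (t := Finset.univ.filter (· ≤ I))
      (fun r hr => by simpa [Submodule.span_singleton_le_iff_mem] using hr)]
    refine Finset.sum_congr rfl fun J hJ => Finset.sum_congr ?_ fun _ _ => rfl
    ext r
    simp only [Finset.mem_filter, Finset.mem_univ, true_and] at hJ ⊢
    exact ⟨fun hr => ⟨hJ (hr ▸ Submodule.mem_span_singleton_self r), hr⟩, And.right⟩
  have hunits (ψ : AddChar R ℂ) : ∑ u : Rˣ, ψ u = sumGens ψ ⊤ := by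
    refine (Finset.sum_map Finset.univ ⟨Units.val, Units.val_injective⟩ ψ).symm.trans
      (Finset.sum_congr ?_ fun _ _ => rfl)
    ext r
    simp [span_op_singleton_eq_top_iff, IsUnit]
  have hgens_eq : sumGens ψ₁ = sumGens ψ₂ := eq_of_forall_sum_le_eq fun I => by
    rw [hsum_le, hsum_le, AddChar.sum_mem_rightIdeal_eq_ite, AddChar.sum_mem_rightIdeal_eq_ite,
      if_congr (h I) rfl rfl]
  rw [hunits, hunits, hgens_eq]

end RightIdeal

section Bimodule

variable {R M : Type*} [Ring R] [AddCommGroup M] [Module Rᵐᵒᵖ M]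

def opSMulChar (χ : AddChar M ℂˣ) (v : M) : AddChar R ℂ where
  toFun r := χ (op r • v)
  map_zero_eq_one' := by simp
  map_add_eq_mul' r s := by rw [op_add, add_smul, AddChar.map_add_eq_mul, Units.val_mul]

@[simp]
theorem opSMulChar_apply (χ : AddChar M ℂˣ) (v : M) (r : R) :
    opSMulChar χ v r = χ (op r • v) := rfl

variable [Module R M] {χ : AddChar M ℂˣ}

theorem IsGenChar.exists_smul_eq_op_smul (hχ : IsGenChar R M χ) (s : R) :
    ∃ t : R, ∀ m : M, χ (s • m) = χ (op t • m) :=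
  hχ.2.1 (χ.compAddMonoidHom (DistribSMul.toAddMonoidHom M s))

theorem IsGenChar.exists_smul_ne_one [Finite M] (hχ : IsGenChar R M χ) {x : M} (hx : x ≠ 0) :
    ∃ r : R, χ (r • x) ≠ 1 := by
  obtain ⟨ψ, hψ⟩ := AddChar.exists_units_apply_ne_one hx
  obtain ⟨r, hr⟩ := hχ.2.2.2 ψ
  exact ⟨r, hr x ▸ hψ⟩

variable [SMulCommClass R Rᵐᵒᵖ M]

theorem IsGenChar.opSMulChar_eq_one_of_mem_span (hχ : IsGenChar R M χ) {I : Submodule Rᵐᵒᵖ R}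
    {v w : M} (hw : w ∈ Submodule.span R {v}) (h : ∀ r ∈ I, opSMulChar χ v r = 1) :
    ∀ r ∈ I, opSMulChar χ w r = 1 := by
  obtain ⟨s, rfl⟩ := Submodule.mem_span_singleton.mp hw
  obtain ⟨t, ht⟩ := hχ.exists_smul_eq_op_smul s
  intro r hr
  have hrt : r * t ∈ I := I.smul_mem (op t) hr
  rw [opSMulChar_apply, ← smul_comm s (op r) v, ht, smul_smul, ← op_mul]
  exact h _ hrt

theorem IsGenChar.sum_units_opSMulChar_eq [Fintype R] (hχ : IsGenChar R M χ) {v w : M}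
    (h : Submodule.span R {v} = Submodule.span R {w}) :
    ∑ u : Rˣ, opSMulChar χ v (u : R) = ∑ u : Rˣ, opSMulChar χ w (u : R) :=
  AddChar.sum_units_eq_of_forall_rightIdeal _ _ fun _ =>
    ⟨hχ.opSMulChar_eq_one_of_mem_span (h ▸ Submodule.mem_span_singleton_self w),
      hχ.opSMulChar_eq_one_of_mem_span (h.symm ▸ Submodule.mem_span_singleton_self v)⟩

theorem IsGenChar.sum_span_op_smul_eq_zero [Fintype M] (hχ : IsGenChar R M χ) {v : M}
    (hv : v ≠ 0) (α : Rˣ) :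
    ∑ w : Submodule.span R {v}, ((χ (op (α : R) • (w : M)) : ℂˣ) : ℂ) = 0 := by
  obtain ⟨r, hr⟩ := hχ.exists_smul_ne_one (x := op (α : R) • v)
    (by simpa [α.isUnit.op] using hv)
  let ψ : AddChar (Submodule.span R {v}) ℂ := (Units.coeHom ℂ).compAddChar
    (χ.compAddMonoidHom ((DistribSMul.toAddMonoidHom M (op (α : R))).comp
      (Submodule.span R {v}).subtype.toAddMonoidHom))
  refine (AddChar.sum_eq_zero_iff_ne_zero (ψ := ψ)).2 (AddChar.ne_zero_iff.2 ⟨⟨r • v, ?_⟩, ?_⟩)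
  · exact Submodule.smul_mem _ r (Submodule.mem_span_singleton_self v)
  · simpa [ψ, smul_comm r (op (α : R)) v] using hr

end Bimodule

section HomogeneousWeight

variable (R : Type*) {M : Type*} [Ring R] [AddCommGroup M] [Fintype M] [Module R M]

structure IsHomogeneousWeight (ω : M → ℂ) : Prop where
  map_zero : ω 0 = 0
  eq_of_span_eq : ∀ v w : M, Submodule.span R {v} = Submodule.span R {w} → ω v = ω w
  sum_span : ∀ v : M, v ≠ 0 →
    ∑ w : Submodule.span R {v}, ω w = (Nat.card (Submodule.span R {v}) : ℂ)

variable {R}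

theorem eq_zero_of_sum_span_eq_zero {G : Type*} [AddCommGroup G] [IsAddTorsionFree G]
    {h : M → G} (h0 : h 0 = 0)
    (hconst : ∀ v w : M, Submodule.span R {v} = Submodule.span R {w} → h v = h w)
    (hsum : ∀ v : M, v ≠ 0 → ∑ w : Submodule.span R {v}, h w = 0) : h = 0 := by
  suffices ∀ N : Submodule R M, ∀ v, Submodule.span R {v} = N → h v = 0 from
    funext fun v => this _ v rfl
  intro N
  induction N using WellFoundedLT.induction with
  | ind N ih =>
    rintro v rfl
    by_cases hv : v = 0
    · rw [hv, h0]
    set gens := Finset.univ.filter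
      fun w : Submodule.span R {v} => Submodule.span R {(w : M)} = Submodule.span R {v}
    have hlower : ∀ w ∉ gens, h w = 0 := fun w hw =>
      ih _ (lt_of_le_of_ne ((Submodule.span_singleton_le_iff_mem _ _).2 w.2)
        (by simpa [gens] using hw)) w rfl
    have hgens : ∀ w ∈ gens, h w = h v := fun w hw => hconst _ _ (by simpa [gens] using hw)
    have hv_mem : ⟨v, Submodule.mem_span_singleton_self v⟩ ∈ gens := by simp [gens]
    have hsum_v := hsum v hv
    rw [← Finset.sum_filter_add_sum_filter_not _ (· ∈ gens),
      Finset.sum_eq_zero fun w hw => hlower w (Finset.mem_filter.1 hw).2, add_zero,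
      Finset.sum_congr rfl fun w hw => hgens w (Finset.mem_filter.1 hw).2,
      Finset.sum_const] at hsum_v
    exact (nsmul_eq_zero_iff_right (Finset.card_ne_zero.2 ⟨_, by simpa using hv_mem⟩)).1
      hsum_v

theorem IsHomogeneousWeight.eq {ω₁ ω₂ : M → ℂ} (h₁ : IsHomogeneousWeight R ω₁)
    (h₂ : IsHomogeneousWeight R ω₂) : ω₁ = ω₂ :=
  sub_eq_zero.1 <| eq_zero_of_sum_span_eq_zero (R := R)
    (by simp [h₁.map_zero, h₂.map_zero])
    (fun v w h => by simp [h₁.eq_of_span_eq v w h, h₂.eq_of_span_eq v w h])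
    (fun v hv => by simp [Finset.sum_sub_distrib, h₁.sum_span v hv, h₂.sum_span v hv])

variable (R) [Fintype R] [Module Rᵐᵒᵖ M]

noncomputable def charWeight (χ : AddChar M ℂˣ) (v : M) : ℂ :=
  1 - (1 / (Nat.card Rˣ : ℂ)) * ∑ α : Rˣ, ((χ (op (α : R) • v) : ℂˣ) : ℂ)

variable {R} [SMulCommClass R Rᵐᵒᵖ M]

theorem IsGenChar.isHomogeneousWeight_charWeight {χ : AddChar M ℂˣ} (hχ : IsGenChar R M χ) :
    IsHomogeneousWeight R (charWeight R χ) where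
  map_zero := by
    have : (Nat.card Rˣ : ℂ) ≠ 0 := Nat.cast_ne_zero.2 Nat.card_pos.ne'
    simp [charWeight, Finset.card_univ, ← Nat.card_eq_fintype_card, this]
  eq_of_span_eq v w h := by
    unfold charWeight
    exact congrArg (1 - (1 / (Nat.card Rˣ : ℂ)) * ·) (hχ.sum_units_opSMulChar_eq h)
  sum_span v hv := by
    simp only [charWeight, Finset.sum_sub_distrib, ← Finset.mul_sum]
    rw [Finset.sum_comm, Finset.sum_eq_zero fun α _ => hχ.sum_span_op_smul_eq_zero hv α]
    simp [Finset.card_univ, Nat.card_eq_fintype_card]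

end HomogeneousWeight

open Classical in
/-- Let `M` be a finite Frobenius bimodule over a finite ring `R` with generating
character `χ`.  If `ω : M → ℂ` is the normalized (left) homogeneous weight, i.e.
`ω(0) = 0`, `ω` is constant on elements generating the same cyclic submodule, and
`∑_{w ∈ Rv} ω(w) = |Rv|` for all `v ≠ 0`, then
`ω(v) = 1 − (1/|R*|) ∑_{α ∈ R*} χ(v·α)` for all `v ∈ M`. -/
theorem homogeneous_weight_formula
    (R M : Type*) [Ring R] [Fintype R] [AddCommGroup M] [Fintype M]
    [Module R M] [Module Rᵐᵒᵖ M] [SMulCommClass R Rᵐᵒᵖ M]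
    (χ : AddChar M ℂˣ) (hχ : IsGenChar R M χ)
    (ω : M → ℂ) (hω0 : ω 0 = 0)
    (hconst : ∀ v w : M, Submodule.span R {v} = Submodule.span R {w} → ω v = ω w)
    (hsum : ∀ v : M, v ≠ 0 →
      ∑ w : Submodule.span R {v}, ω w = (Nat.card (Submodule.span R {v}) : ℂ)) :
    ∀ v : M, ω v = 1 - (1 / (Nat.card Rˣ : ℂ)) * ∑ α : Rˣ, ((χ (op (α : R) • v) : ℂˣ) : ℂ) :=
  congrFun (IsHomogeneousWeight.eq ⟨hω0, hconst, hsum⟩ hχ.isHomogeneousWeight_charWeight)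
end
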